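/- (Channel simulation from a bin index.) Let 𝒳 be a finite set with |𝒳| ≥ 2, let X([n]) be n i.i.d. copies of a uniform random variable on 𝒳, let R < log₂|𝒳| and δ > 0, and let 𝔅 : 𝒳ⁿ → [⌈2^{nR}⌉] be a uniformly random binning (each sequence mapped independently and uniformly to a bin index); set B = 𝔅(X([n])). Let 𝒯 be a finite set with |𝒯| = ⌈2^{n(log₂|𝒳| − R + δ)}⌉ and let T be uniform on 𝒯, independent of everything else. Then there exists η > 0 such that for all sufficiently large n, for each realization of 𝔅 there exists a deterministic function φ : 𝒯 × [⌈2^{nR}⌉] → 𝒳ⁿ such that, defining the simulated channel p̃_{X([n])|B}(xⁿ | b) = (1/|𝒯|)·∑_{t∈𝒯} 𝟙[φ(t,b) = xⁿ], one has 𝔼_𝔅 ‖ p_B · p_{X([n])|B} − p_B · p̃_{X([n])|B} ‖₁ ≤ 2^{−ηn}, where p_B · p_{X([n])|B} denotes the joint pmf of (B, X([n])) and the expectation is over the random binning. -/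

import Mathlib

open Finset

noncomputable section

/-- Number of bins `⌈2^{nR}⌉`. -/
def nbR (R : ℝ) (n : ℕ) : ℕ := ⌈(2 : ℝ) ^ ((n : ℝ) * R)⌉₊

/-- Size of the external randomness alphabet `|𝒯| = ⌈2^{n(log₂ q − R + δ)}⌉`
(with `q = |𝒳|`). -/
def tcard (q : ℕ) (R δ : ℝ) (n : ℕ) : ℕ :=
  ⌈(2 : ℝ) ^ ((n : ℝ) * (Real.logb 2 q - R + δ))⌉₊

/-- Total variation distance between the true joint pmf of `(B, X([n]))` (with
`X([n])` uniform on `𝒳ⁿ` and `B = 𝔅(X([n]))`) and the simulated joint pmf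
`p_B · p̃_{X([n])|B}`, where `p̃(xⁿ|b) = (1/|𝒯|)·∑_t 𝟙[φ(t,b) = xⁿ]`. -/
def tvSim {𝒳 : Type} [Fintype 𝒳] [DecidableEq 𝒳] (R δ : ℝ) (n : ℕ)
    (𝔅 : (Fin n → 𝒳) → Fin (nbR R n))
    (φ : Fin (tcard (Fintype.card 𝒳) R δ n) × Fin (nbR R n) → (Fin n → 𝒳)) : ℝ :=
  2⁻¹ * ∑ b : Fin (nbR R n), ∑ x : Fin n → 𝒳,
    |(if 𝔅 x = b then (Fintype.card (Fin n → 𝒳) : ℝ)⁻¹ else 0) -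
      (((univ.filter (fun y : Fin n → 𝒳 => 𝔅 y = b)).card : ℝ) /
          (Fintype.card (Fin n → 𝒳) : ℝ)) *
        ((Fintype.card (Fin (tcard (Fintype.card 𝒳) R δ n)) : ℝ)⁻¹ *
          ((univ.filter (fun τ : Fin (tcard (Fintype.card 𝒳) R δ n) =>
            φ (τ, b) = x)).card : ℝ))|

/-! Split each bin `s` among the `T` values of the external randomness round-robin,
`τ ↦ (τ mod |s|)`-th element of `s`: every element of `s` is hit `⌊T/|s|⌋` or `⌈T/|s|⌉` times,
so the bin contributes at most `|s|² / (|𝒳|ⁿ T)` to the ℓ¹ error. Averaged over a uniform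
binning into `M` bins, `∑_b |s_b|²` counts colliding pairs and has mean at most
`|𝒳|ⁿ (1 + |𝒳|ⁿ / M)`, so the expected distance is at most
`(1 + |𝒳|ⁿ/M) / (2T) ≤ 2^{n(log₂|𝒳| - R)} / 2^{n(log₂|𝒳| - R + δ)} = 2^{-δn}`. -/

section FiberCounting

variable {α β : Type*} [Fintype α] [DecidableEq α] [Fintype β] [DecidableEq β]

theorem card_filter_apply_eq_apply_mul_card {x y : α} (hxy : x ≠ y) :
    #{f : α → β | f x = f y} * Fintype.card β = Fintype.card (α → β) := by
  rw [← Fintype.card_subtype, ← Fintype.card_prod]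
  refine Fintype.card_congr
    { toFun := fun p => Function.update p.1.1 y p.2
      invFun := fun g => (⟨Function.update g y (g x), by simp [hxy]⟩, g y)
      left_inv := ?_
      right_inv := fun g => by simp }
  rintro ⟨⟨f, hf⟩, c⟩
  simp [hxy, hf]

omit [DecidableEq α] in
theorem sum_card_fiber_sq (f : α → β) :
    ∑ b, #{x | f x = b} ^ 2 = #{p : α × α | f p.1 = f p.2} := by
  rw [card_eq_sum_card_fiberwise (f := fun p => f p.1) (t := univ) (fun _ _ => mem_univ _)]
  refine sum_congr rfl fun b _ => ?_
  rw [sq, ← card_product]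
  congr 1
  ext ⟨x, y⟩
  simp only [mem_product, mem_filter, mem_univ, true_and]
  constructor
  · rintro ⟨rfl, h⟩; exact ⟨h.symm, rfl⟩
  · rintro ⟨h, rfl⟩; exact ⟨rfl, h.symm⟩

theorem card_filter_apply_eq_apply_le (p : α × α) :
    (#{f : α → β | f p.1 = f p.2} : ℝ)
      ≤ Fintype.card (α → β) * ((if p.1 = p.2 then 1 else 0) + (Fintype.card β : ℝ)⁻¹) := by
  have hle : (#{f : α → β | f p.1 = f p.2} : ℝ) ≤ Fintype.card (α → β) := by
    exact_mod_cast card_le_univ _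
  split_ifs with h
  · exact hle.trans (le_mul_of_one_le_right (by positivity) (by simp))
  · have hC := card_filter_apply_eq_apply_mul_card (β := β) h
    rcases eq_or_ne (Fintype.card β) 0 with hβ | hβ
    · rw [hβ, mul_zero] at hC
      simpa [← hC] using hle
    · rw [zero_add, ← hC]
      push_cast
      field_simp
      rfl

theorem sum_sum_card_fiber_sq_le :
    ∑ f : α → β, ∑ b, (#{x | f x = b} : ℝ) ^ 2
      ≤ Fintype.card (α → β) * (Fintype.card α * (1 + Fintype.card α / Fintype.card β)) := by
  have hcoll (f : α → β) : ∑ b, (#{x | f x = b} : ℝ) ^ 2 = #{p : α × α | f p.1 = f p.2} := by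
    exact_mod_cast sum_card_fiber_sq f
  calc ∑ f : α → β, ∑ b, (#{x | f x = b} : ℝ) ^ 2
      = ∑ p : α × α, (#{f : α → β | f p.1 = f p.2} : ℝ) := by
        rw [sum_congr rfl fun f _ => hcoll f]
        simp only [card_filter]
        push_cast
        exact sum_comm
    _ ≤ ∑ p : α × α, (Fintype.card (α → β) : ℝ) *
          ((if p.1 = p.2 then 1 else 0) + (Fintype.card β : ℝ)⁻¹) :=
        sum_le_sum fun p _ => card_filter_apply_eq_apply_le p
    _ = _ := by
        rw [← mul_sum, sum_add_distrib, Fintype.sum_prod_type]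
        simp only [sum_ite_eq, mem_univ, if_true, sum_const, card_univ, Fintype.card_prod,
          nsmul_eq_mul]
        push_cast
        ring

end FiberCounting

theorem Fin.card_filter_val_mod_eq (T : ℕ) {k i : ℕ} (hi : i < k) :
    #{τ : Fin T | (τ : ℕ) % k = i} = T / k + if i < T % k then 1 else 0 := by
  have h := Nat.count_modEq_card T (i.zero_le.trans_lt hi) i
  rw [Nat.mod_eq_of_lt hi] at h
  rw [← h, Nat.count_eq_card_filter_range, ← card_map Fin.valEmbedding, map_filter',
    Fin.map_valEmbedding_univ, Nat.Iio_eq_range]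
  congr 1
  ext t
  simp +contextual [Nat.ModEq, Nat.mod_eq_of_lt hi, Fin.exists_iff]

theorem Fin.abs_sub_mul_card_filter_val_mod_le (T : ℕ) {k i : ℕ} (hi : i < k) :
    |(T : ℝ) - k * #{τ : Fin T | (τ : ℕ) % k = i}| ≤ k := by
  have hT : (T : ℝ) = k * (T / k : ℕ) + (T % k : ℕ) := by
    exact_mod_cast (Nat.div_add_mod T k).symm
  have hmod : ((T % k : ℕ) : ℝ) < k := by exact_mod_cast Nat.mod_lt T (i.zero_le.trans_lt hi)
  rw [Fin.card_filter_val_mod_eq T hi, abs_le]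
  split_ifs <;> push_cast <;> constructor <;> nlinarith [(T % k).cast_nonneg (α := ℝ)]

section BinSimulation

variable {α : Type*} [DecidableEq α]

theorem Finset.exists_balanced_map {s : Finset α} (hs : s.Nonempty) (T : ℕ) :
    ∃ φ : Fin T → α, (∀ τ, φ τ ∈ s) ∧ ∀ x ∈ s, |(T : ℝ) - #s * #{τ | φ τ = x}| ≤ #s := by
  have hk : 0 < #s := hs.card_pos
  let e := s.equivFin
  refine ⟨fun τ => e.symm ⟨τ % #s, Nat.mod_lt _ hk⟩, fun τ => (e.symm _).2, fun x hx => ?_⟩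
  have hfib (τ : Fin T) :
      (e.symm ⟨τ % #s, Nat.mod_lt _ hk⟩ : α) = x ↔ (τ : ℕ) % #s = e ⟨x, hx⟩ :=
    (Subtype.ext_iff (a2 := ⟨x, hx⟩)).symm.trans (e.symm_apply_eq.trans Fin.ext_iff)
  simp_rw [hfib]
  exact Fin.abs_sub_mul_card_filter_val_mod_le T (e ⟨x, hx⟩).2

theorem Finset.exists_bin_simulation [Fintype α] [Nonempty α] (s : Finset α) {T : ℕ}
    (hT : 0 < T) {K : ℝ} (hK : 0 < K) :
    ∃ φ : Fin T → α, ∑ x, |(if x ∈ s then K⁻¹ else 0) - #s / K * ((T : ℝ)⁻¹ * #{τ | φ τ = x})|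
      ≤ #s ^ 2 / (K * T) := by
  rcases s.eq_empty_or_nonempty with rfl | hs
  · exact ⟨fun _ => Classical.arbitrary α, by simp⟩
  obtain ⟨φ, hφs, hφ⟩ := s.exists_balanced_map hs T
  refine ⟨φ, ?_⟩
  have hterm (x : α) : |(if x ∈ s then K⁻¹ else 0) - #s / K * ((T : ℝ)⁻¹ * #{τ | φ τ = x})|
      ≤ if x ∈ s then (#s : ℝ) / (K * T) else 0 := by
    split_ifs with hx
    · have hT' : (0 : ℝ) < T := by exact_mod_cast hT
      rw [show K⁻¹ - #s / K * ((T : ℝ)⁻¹ * #{τ | φ τ = x})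
          = ((T : ℝ) - #s * #{τ | φ τ = x}) / (K * T) by field_simp,
        abs_div, abs_of_pos (mul_pos hK hT')]
      exact div_le_div_of_nonneg_right (hφ x hx) (mul_pos hK hT').le
    · have hempty : #{τ | φ τ = x} = 0 :=
        card_eq_zero.2 (filter_eq_empty_iff.2 fun τ _ h => hx (h ▸ hφs τ))
      simp [hempty]
  calc _ ≤ ∑ x, if x ∈ s then (#s : ℝ) / (K * T) else 0 := sum_le_sum fun x _ => hterm x
    _ = #s ^ 2 / (K * T) := by
      rw [sum_ite_mem, univ_inter, sum_const, nsmul_eq_mul]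
      ring

end BinSimulation

theorem inv_tcard_mul_one_add_div_nbR_le {q : ℕ} (hq : 0 < q) {R : ℝ}
    (hR : R < Real.logb 2 q) (δ : ℝ) (n : ℕ) :
    2⁻¹ * (tcard q R δ n : ℝ)⁻¹ * (1 + (q : ℝ) ^ n / nbR R n) ≤ 2 ^ (-(δ * n)) := by
  set L := Real.logb 2 q
  have hqn : (q : ℝ) ^ n = 2 ^ (n * L) := by
    rw [mul_comm, Real.rpow_mul zero_le_two, Real.rpow_logb two_pos (by norm_num) (by positivity),
      Real.rpow_natCast]
  have hM : (2 : ℝ) ^ (n * R) ≤ nbR R n := Nat.le_ceil _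
  have hT : (2 : ℝ) ^ (n * (L - R + δ)) ≤ tcard q R δ n := Nat.le_ceil _
  have hone : (1 : ℝ) ≤ 2 ^ (n * (L - R)) :=
    Real.one_le_rpow one_le_two (mul_nonneg n.cast_nonneg (sub_nonneg.2 hR.le))
  have hratio : (q : ℝ) ^ n / nbR R n ≤ 2 ^ (n * (L - R)) := by
    rw [hqn, mul_sub, Real.rpow_sub two_pos]
    gcongr
  calc _ ≤ 2⁻¹ * ((2 : ℝ) ^ (n * (L - R + δ)))⁻¹ * (2 * 2 ^ (n * (L - R))) := by
        gcongr
        linarith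
    _ = 2 ^ (-(n * (L - R + δ))) * 2 ^ (n * (L - R)) := by
        rw [Real.rpow_neg zero_le_two]
        ring
    _ = 2 ^ (-(δ * n)) := by
        rw [← Real.rpow_add two_pos]
        ring_nf

theorem exists_tvSim_le {𝒳 : Type} [Fintype 𝒳] [DecidableEq 𝒳] [Nonempty 𝒳] (R δ : ℝ) (n : ℕ)
    (𝔅 : (Fin n → 𝒳) → Fin (nbR R n)) :
    ∃ φ, tvSim R δ n 𝔅 φ ≤ 2⁻¹ * ∑ b, (#{x | 𝔅 x = b} : ℝ) ^ 2 /
      ((Fintype.card 𝒳 : ℝ) ^ n * tcard (Fintype.card 𝒳) R δ n) := by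
  have hT : 0 < tcard (Fintype.card 𝒳) R δ n := Nat.ceil_pos.mpr (by positivity)
  have hK : (0 : ℝ) < (Fintype.card 𝒳 : ℝ) ^ n := by positivity
  choose Φ hΦ using fun b : Fin (nbR R n) => Finset.exists_bin_simulation {x | 𝔅 x = b} hT hK
  refine ⟨fun p => Φ p.2 p.1, ?_⟩
  unfold tvSim
  gcongr with b
  simpa only [mem_filter, mem_univ, true_and, Fintype.card_fin, Fintype.card_fun,
    Nat.cast_pow] using hΦ b

/-- **Channel simulation from a bin index.** For `X([n])` uniform i.i.d.
on `𝒳` (`|𝒳| ≥ 2`), a uniformly random binning `𝔅` at rate `R < log₂|𝒳|` and any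
`δ > 0`, there is `η > 0` so that for all large `n` one can pick, for each realization
of `𝔅`, a deterministic simulation function `φ : 𝒯 × bins → 𝒳ⁿ` using randomness of
rate `log₂|𝒳| − R + δ`, such that the expected total variation distance between the
true joint of `(B, X([n]))` and the simulated one is at most `2^{−ηn}`. -/
theorem channel_simulation_from_bin_index {𝒳 : Type} [Fintype 𝒳] [DecidableEq 𝒳]
    (hX : 2 ≤ Fintype.card 𝒳) (R δ : ℝ)
    (hR : R < Real.logb 2 (Fintype.card 𝒳)) (hδ : 0 < δ) :
    ∃ η : ℝ, 0 < η ∧ ∃ N : ℕ, ∀ n ≥ N,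
      ∃ φ : ((Fin n → 𝒳) → Fin (nbR R n)) →
          (Fin (tcard (Fintype.card 𝒳) R δ n) × Fin (nbR R n) → (Fin n → 𝒳)),
        (Fintype.card ((Fin n → 𝒳) → Fin (nbR R n)) : ℝ)⁻¹ *
            ∑ 𝔅 : (Fin n → 𝒳) → Fin (nbR R n), tvSim R δ n 𝔅 (φ 𝔅)
          ≤ (2 : ℝ) ^ (-(η * (n : ℝ))) := by
  refine ⟨δ, hδ, 0, fun n _ => ?_⟩
  have hq : 0 < Fintype.card 𝒳 := by omega
  have : Nonempty 𝒳 := Fintype.card_pos_iff.mp hq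
  choose φ hφ using exists_tvSim_le (𝒳 := 𝒳) R δ n
  refine ⟨φ, ?_⟩
  set M := nbR R n
  set T := tcard (Fintype.card 𝒳) R δ n
  set K : ℝ := (Fintype.card 𝒳 : ℝ) ^ n
  set C : ℝ := ((Fintype.card ((Fin n → 𝒳) → Fin M) : ℕ) : ℝ)
  have hM : 0 < M := Nat.ceil_pos.mpr (by positivity)
  have hC : 0 < C := Nat.cast_pos.2 (Fintype.card_pos_iff.2 ⟨fun _ => ⟨0, hM⟩⟩)
  have hK : 0 < K := by positivity
  calc _ ≤ C⁻¹ * ∑ 𝔅 : (Fin n → 𝒳) → Fin M, 2⁻¹ * ∑ b, (#{x | 𝔅 x = b} : ℝ) ^ 2 / (K * T) := by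
        gcongr with 𝔅
        exact hφ 𝔅
    _ = 2⁻¹ / (K * T) * (C⁻¹ * ∑ 𝔅 : (Fin n → 𝒳) → Fin M, ∑ b, (#{x | 𝔅 x = b} : ℝ) ^ 2) := by
        simp_rw [← sum_div, ← mul_div_assoc, ← sum_div, ← mul_sum]
        ring
    _ ≤ 2⁻¹ / (K * T) * (K * (1 + K / M)) := by
        refine mul_le_mul_of_nonneg_left ?_ (by positivity)
        rw [inv_mul_le_iff₀ hC]
        simpa only [C, K, Fintype.card_fun, Fintype.card_fin, Nat.cast_pow]
          using sum_sum_card_fiber_sq_le (α := Fin n → 𝒳) (β := Fin M)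
    _ = 2⁻¹ * (T : ℝ)⁻¹ * (1 + K / M) := by
        field_simp [hK.ne']
    _ ≤ _ := inv_tcard_mul_one_add_div_nbR_le hq hR δ n
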